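/- ∫₀^∞ x³/(eˣ - 1) dx = π⁴/15. -/

import Mathlib

/-!
Expanding `1 / (eˣ - 1) = ∑ₙ e^{-(n+1)x}` as a geometric series and integrating term by term
(the terms are nonnegative, so the interchange is justified by summability of their integrals)
gives `∫₀^∞ xᵏ / (eˣ - 1) dx = ∑ₙ k! / (n+1)^(k+1) = k! ζ(k+1)`. For `k = 3` this is
`6 ζ(4) = 6 π⁴ / 90 = π⁴ / 15`.
-/

open Real MeasureTheory Set Nat

lemma hasSum_exp_neg_mul_succ {t : ℝ} (ht : 0 < t) :
    HasSum (fun n : ℕ => exp (-((n + 1) * t))) (1 / (exp t - 1)) := by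
  have hgeom := (hasSum_geometric_of_lt_one (exp_pos (-t)).le
    (exp_lt_one_iff.mpr (neg_lt_zero.mpr ht))).mul_left (exp (-t))
  have hterm : ∀ n : ℕ, exp (-t) * exp (-t) ^ n = exp (-((n + 1) * t)) := fun n => by
    rw [← exp_nat_mul, ← exp_add]
    ring_nf
  have hsum : exp (-t) * (1 - exp (-t))⁻¹ = 1 / (exp t - 1) := by
    have : exp t - 1 ≠ 0 := (sub_pos.mpr (one_lt_exp_iff.mpr ht)).ne'
    rw [exp_neg]
    field_simp
  simpa only [hterm, hsum] using hgeom

lemma integrableOn_pow_mul_exp_neg_mul_Ioi (k : ℕ) {r : ℝ} (hr : 0 < r) :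
    IntegrableOn (fun t : ℝ => t ^ k * exp (-(r * t))) (Ioi 0) := by
  have hk : (-1 : ℝ) < k := by linarith [k.cast_nonneg (α := ℝ)]
  refine (integrableOn_rpow_mul_exp_neg_mul_rpow hk one_pos hr).congr_fun (fun t _ => ?_)
    measurableSet_Ioi
  simp only [rpow_one, rpow_natCast, neg_mul]

lemma integral_pow_mul_exp_neg_mul_Ioi (k : ℕ) {r : ℝ} (hr : 0 < r) :
    ∫ t in Ioi 0, t ^ k * exp (-(r * t)) = k ! / r ^ (k + 1) := by
  have h := integral_rpow_mul_exp_neg_mul_Ioi (a := k + 1) (by positivity) hr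
  simp only [add_sub_cancel_right, rpow_natCast] at h
  rw [h, Gamma_nat_eq_factorial, ← Nat.cast_succ, rpow_natCast, one_div_pow,
    Nat.succ_eq_add_one]
  ring

theorem integral_pow_div_exp_sub_one {k : ℕ} (hk : 1 ≤ k) :
    ∫ x in Ioi 0, x ^ k / (exp x - 1) = k ! * ∑' n : ℕ, 1 / ((n : ℝ) + 1) ^ (k + 1) := by
  set F : ℕ → ℝ → ℝ := fun n t => t ^ k * exp (-((n + 1) * t))
  have hF_int :
      ∀ n : ℕ, ∫ t in Ioi 0, F n t = k ! * (1 / ((n : ℝ) + 1) ^ (k + 1)) := fun n => by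
    rw [integral_pow_mul_exp_neg_mul_Ioi k (by positivity)]
    ring
  have hF_norm : ∀ n : ℕ, ∫ t in Ioi 0, ‖F n t‖ = ∫ t in Ioi 0, F n t := fun n =>
    setIntegral_congr_fun measurableSet_Ioi fun t (ht : 0 < t) =>
      norm_of_nonneg (by positivity)
  have hsummable : Summable fun n : ℕ => 1 / ((n : ℝ) + 1) ^ (k + 1) := by
    have := (summable_nat_add_iff 1).mpr (summable_one_div_nat_pow.mpr (by omega : 1 < k + 1))
    simpa only [Nat.cast_add, Nat.cast_one] using this
  have hseries := hasSum_integral_of_summable_integral_norm (F := F)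
    (fun n => integrableOn_pow_mul_exp_neg_mul_Ioi k (by positivity : (0 : ℝ) < n + 1))
    (by simpa only [hF_norm, hF_int] using hsummable.mul_left (k ! : ℝ))
  have hpointwise :
      ∀ᵐ t ∂(volume.restrict (Ioi (0 : ℝ))), ∑' n, F n t = t ^ k / (exp t - 1) := by
    filter_upwards [ae_restrict_mem measurableSet_Ioi] with t (ht : 0 < t)
    rw [((hasSum_exp_neg_mul_succ ht).mul_left (t ^ k)).tsum_eq, mul_one_div]
  rw [← integral_congr_ae hpointwise, ← hseries.tsum_eq, ← tsum_mul_left]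
  exact tsum_congr hF_int

lemma tsum_one_div_succ_pow_four : ∑' n : ℕ, 1 / ((n : ℝ) + 1) ^ 4 = π ^ 4 / 90 := by
  simpa using ((hasSum_nat_add_iff' 1).mpr hasSum_zeta_four).tsum_eq

/-- `∫₀^∞ x³/(eˣ - 1) dx = π⁴/15`. -/
theorem integral_cube_div_exp_sub_one :
    ∫ x in Set.Ioi (0 : ℝ), x ^ 3 / (Real.exp x - 1) = Real.pi ^ 4 / 15 := by
  rw [integral_pow_div_exp_sub_one (by norm_num), tsum_one_div_succ_pow_four]
  norm_num [Nat.factorial]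
  ring
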